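/- (Termination on acyclic switch graphs.) Let (V, s₀, s₁) be an acyclic switch graph. Then for every starting vertex v₀ and every initial switch assignment σ₀, there exists k ≤ 2·|V| such that after k iterations of the step map from (v₀, σ₀) the position is an absorbing vertex (and the train remains at that vertex ever after). -/

import Mathlib

open scoped Classical

variable {V : Type*}

/-- One step of the train: move along the edge given by the current switch state
and toggle the switch at the current vertex. -/
def step [DecidableEq V] (s0 s1 : V → V) (c : V × (V → Bool)) : V × (V → Bool) :=
  (if c.2 c.1 then s1 c.1 else s0 c.1, Function.update c.2 c.1 (!c.2 c.1))

/-- Configuration after `k` iterations of the step map from configuration `c`. -/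
def traj [DecidableEq V] (s0 s1 : V → V) (c : V × (V → Bool)) (k : ℕ) :
    V × (V → Bool) :=
  (step s0 s1)^[k] c

/-- A vertex is absorbing if both of its out-edges are self-loops. -/
def Absorbing (s0 s1 : V → V) (v : V) : Prop := s0 v = v ∧ s1 v = v

/-- A switch graph is acyclic if every directed cycle (a closed edge-sequence of
positive length) is trivial, i.e. all its vertices are equal (only self-loops). -/
def IsAcyclicSG (s0 s1 : V → V) : Prop :=
  ∀ (k : ℕ) (v : ℕ → V), 1 ≤ k → v k = v 0 →
    (∀ j < k, v (j + 1) = s0 (v j) ∨ v (j + 1) = s1 (v j)) →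
    ∀ j ≤ k, v j = v 0

/-- Termination on acyclic switch graphs: from any configuration `(v₀, σ₀)`, within
`2 · |V|` steps the train reaches an absorbing vertex and remains there ever after. -/
theorem acyclic_terminates [Fintype V] [DecidableEq V] (s0 s1 : V → V)
    (hacyc : IsAcyclicSG s0 s1) (v0 : V) (σ0 : V → Bool) :
    ∃ k ≤ 2 * Fintype.card V,
      Absorbing s0 s1 (traj s0 s1 (v0, σ0) k).1 ∧
      ∀ j, k ≤ j → (traj s0 s1 (v0, σ0) j).1 = (traj s0 s1 (v0, σ0) k).1 := by
  set f : ℕ → V := fun j => (traj s0 s1 (v0, σ0) j).1 with hf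
  have traj_succ : ∀ j, traj s0 s1 (v0, σ0) (j + 1) = step s0 s1 (traj s0 s1 (v0, σ0) j) := by
    intro j; simp [traj, Function.iterate_succ_apply']
  have hfstep : ∀ j, f (j + 1) =
      (if (traj s0 s1 (v0, σ0) j).2 (f j) then s1 (f j) else s0 (f j)) := by
    intro j
    show (traj s0 s1 (v0, σ0) (j + 1)).1 = _
    rw [traj_succ j]; rfl
  have hedge : ∀ j, f (j + 1) = s0 (f j) ∨ f (j + 1) = s1 (f j) := by
    intro j
    by_cases hb : (traj s0 s1 (v0, σ0) j).2 (f j)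
    · right; rw [hfstep j, if_pos hb]
    · left; rw [hfstep j, if_neg hb]
  -- no revisit: if the trajectory returns, everything in between is equal
  have hnr : ∀ i j m, i ≤ m → m ≤ j → f j = f i → f m = f i := by
    intro i j m him hmj hji
    rcases eq_or_lt_of_le (him.trans hmj) with h | h
    · have : m = i := by omega
      rw [this]
    · have hk : 1 ≤ j - i := by omega
      have h0 : (fun t => f (i + t)) (j - i) = (fun t => f (i + t)) 0 := by
        simp only []
        have : i + (j - i) = j := by omega
        rw [this]; simpa using hji
      have hE : ∀ t < j - i, (fun t => f (i + t)) (t + 1) = s0 ((fun t => f (i + t)) t) ∨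
          (fun t => f (i + t)) (t + 1) = s1 ((fun t => f (i + t)) t) := by
        intro t _
        have : i + (t + 1) = (i + t) + 1 := by omega
        simp only [this]
        exact hedge (i + t)
      have := hacyc (j - i) (fun t => f (i + t)) hk h0 hE (m - i) (by omega)
      have hmi : i + (m - i) = m := by omega
      rw [hmi] at this
      simpa using this
  -- staying twice at a vertex means it is absorbing
  have hstay : ∀ j, f (j + 1) = f j → f (j + 2) = f j → Absorbing s0 s1 (f j) := by
    intro j h1 h2
    set c := traj s0 s1 (v0, σ0) j with hc
    have hfj : f j = c.1 := rfl
    have hσ : (traj s0 s1 (v0, σ0) (j + 1)).2 (f (j + 1)) = !(c.2 c.1) := by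
      rw [traj_succ j, h1]
      show Function.update c.2 c.1 (!c.2 c.1) (f j) = _
      rw [hfj, Function.update_self]
    have hf1 : f (j + 1) = (if c.2 c.1 then s1 c.1 else s0 c.1) := hfstep j
    have hf2 : f (j + 2) = (if !(c.2 c.1) then s1 (f (j+1)) else s0 (f (j+1))) := by
      rw [hfstep (j + 1), hσ]
    rw [h1, hfj] at hf2
    by_cases hb : c.2 c.1
    · rw [if_pos hb] at hf1
      rw [hb, Bool.not_true, if_neg (by simp)] at hf2
      rw [hfj]
      exact ⟨hf2.symm.trans h2, hf1.symm.trans h1⟩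
    · rw [if_neg hb] at hf1
      have hbf : c.2 c.1 = false := by simpa using hb
      rw [hbf, Bool.not_false, if_pos rfl] at hf2
      rw [hfj]
      exact ⟨hf1.symm.trans h1, hf2.symm.trans h2⟩
  -- absorbing vertices are fixed forever
  have habs : ∀ k, Absorbing s0 s1 (f k) → ∀ j, k ≤ j → f j = f k := by
    intro k hA j hkj
    induction j with
    | zero => have : k = 0 := by omega
              rw [this]
    | succ j ih =>
        rcases Nat.lt_or_ge k (j + 1) with h | h
        · have hj : k ≤ j := by omega
          have hfj := ih hj
          rcases hedge j with h0 | h0 <;> rw [h0, hfj]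
          · exact hA.1
          · exact hA.2
        · have : k = j + 1 := by omega
          rw [this]
  have key : ∃ k ≤ 2 * Fintype.card V, Absorbing s0 s1 (f k) := by
    by_contra hcon
    push_neg at hcon
    have haux : ∀ a b : ℕ, a < b → b ≤ Fintype.card V → f (2 * a) ≠ f (2 * b) := by
      intro a b hab hb heq
      have h1 : f (2 * a + 1) = f (2 * a) :=
        hnr (2 * a) (2 * b) (2 * a + 1) (by omega) (by omega) heq.symm
      have h2 : f (2 * a + 2) = f (2 * a) :=
        hnr (2 * a) (2 * b) (2 * a + 2) (by omega) (by omega) heq.symm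
      exact hcon (2 * a) (by omega) (hstay (2 * a) h1 h2)
    have hinj : Function.Injective (fun m : Fin (Fintype.card V + 1) => f (2 * (m : ℕ))) := by
      intro a b hab
      by_contra hne
      have hne' : (a : ℕ) ≠ (b : ℕ) := fun h => hne (Fin.ext h)
      rcases lt_or_gt_of_ne hne' with h | h
      · exact haux a b h (by omega) hab
      · exact haux b a h (by omega) hab.symm
    have := Fintype.card_le_of_injective _ hinj
    simp at this
  obtain ⟨k, hk, hA⟩ := key
  exact ⟨k, hk, hA, fun j hj => habs k hA j hj⟩
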